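/- arXiv:1505.00939 — 4 statements merged into one kernel-verified Lean document; each statement's English description precedes it below -/
import Mathlib

section
/- Let K be a commutative ring, p ≥ 2, and let M(t) be the lower-triangular matrices of the previous statement acting on V = K^{p−1} with standard basis e_1, …, e_{p−1} (where e_r plays the role of the weight vector e_{2r}). Define γ : K → V by γ(t) = Σ_{r=1}^{p−1} C(p−1, r) t^r e_r. Then γ satisfies the 1-cocycle identity γ(t₁ + t₂) = γ(t₁) + M(t₁) · γ(t₂) for all t₁, t₂ ∈ K. -/
/-!
Expanding `(t₁ + t₂)^(m+1)` binomially, the term with no `t₂` is the `m`-th coordinate of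
`γ(t₁)`, and the term in `t₁^(m-r) t₂^(r+1)` is the `r`-th summand of `(M(t₁) γ(t₂))_m`
thanks to the subset-of-a-subset identity
`C(n, m+1) C(m+1, r+1) = C(n, r+1) C(n-(r+1), m-r)`.
-/

open Finset

theorem Fin.sum_ite_val_le {R : Type*} [AddCommMonoid R] {n m : ℕ} (hm : m < n) (f : ℕ → R) :
    ∑ r : Fin n, (if (r : ℕ) ≤ m then f r else 0) = ∑ r ∈ range (m + 1), f r := by
  rw [Fin.sum_univ_eq_sum_range (fun r => if r ≤ m then f r else 0), ← sum_filter]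
  congr 1
  ext r
  simp only [mem_filter, mem_range]
  omega

theorem Nat.choose_mul_add_pow_succ {R : Type*} [CommRing R] (n m : ℕ) (a b : R) :
    (n.choose (m + 1) : R) * (a + b) ^ (m + 1) =
      n.choose (m + 1) * a ^ (m + 1) +
        ∑ r ∈ range (m + 1),
          ((n - (r + 1)).choose (m - r) * a ^ (m - r)) * (n.choose (r + 1) * b ^ (r + 1)) := by
  rw [add_comm a b, add_pow, sum_range_succ', mul_add, add_comm, mul_sum]
  simp only [pow_zero, one_mul, Nat.choose_zero_right, Nat.cast_one, mul_one, Nat.sub_zero]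
  congr 1
  refine sum_congr rfl fun r hr => ?_
  have hrm : r + 1 ≤ m + 1 := by simpa [Nat.lt_succ_iff] using hr
  have hchoose : (n.choose (m + 1) : R) * (m + 1).choose (r + 1) =
      n.choose (r + 1) * (n - (r + 1)).choose (m - r) := by
    have h := Nat.choose_mul (n := n) hrm
    rw [Nat.add_sub_add_right] at h
    exact_mod_cast congrArg (Nat.cast : ℕ → R) h
  rw [Nat.add_sub_add_right]
  linear_combination (b ^ (r + 1) * a ^ (m - r)) * hchoose

theorem explicit_cocycle_identity_general (K : Type*) [CommRing K] (p : ℕ)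
    (M : K → Matrix (Fin (p - 1)) (Fin (p - 1)) K)
    (hM : ∀ (t : K) (m r : Fin (p - 1)),
      M t m r = if (r : ℕ) ≤ (m : ℕ) then
        ((p - 1 - ((r : ℕ) + 1)).choose ((m : ℕ) - (r : ℕ)) : K) * t ^ ((m : ℕ) - (r : ℕ))
      else 0)
    (γ : K → (Fin (p - 1) → K))
    (hγ : ∀ (t : K) (r : Fin (p - 1)),
      γ t r = ((p - 1).choose ((r : ℕ) + 1) : K) * t ^ ((r : ℕ) + 1)) :
    ∀ t₁ t₂ : K, γ (t₁ + t₂) = γ t₁ + (M t₁).mulVec (γ t₂) := by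
  intro t₁ t₂
  funext m
  simp only [Pi.add_apply, Matrix.mulVec, dotProduct, hγ, hM, ite_mul, zero_mul]
  rw [Nat.choose_mul_add_pow_succ, ← Fin.sum_ite_val_le m.isLt]

/-- With `M(t)` the lower-triangular unipotent matrices with entries
`M(t)_{m,r} = C(p−1−r, m−r) t^{m−r}` acting on `V = K^{p−1}`, the map
`γ(t) = Σ_{r=1}^{p−1} C(p−1, r) tʳ e_r` satisfies the 1-cocycle identity
`γ(t₁ + t₂) = γ(t₁) + M(t₁)·γ(t₂)`. -/
theorem explicit_cocycle_identity (K : Type*) [CommRing K] (p : ℕ) (hp : 2 ≤ p)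
    (M : K → Matrix (Fin (p - 1)) (Fin (p - 1)) K)
    (hM : ∀ (t : K) (m r : Fin (p - 1)),
      M t m r = if (r : ℕ) ≤ (m : ℕ) then
        ((p - 1 - ((r : ℕ) + 1)).choose ((m : ℕ) - (r : ℕ)) : K) * t ^ ((m : ℕ) - (r : ℕ))
      else 0)
    (γ : K → (Fin (p - 1) → K))
    (hγ : ∀ (t : K) (r : Fin (p - 1)),
      γ t r = ((p - 1).choose ((r : ℕ) + 1) : K) * t ^ ((r : ℕ) + 1)) :
    ∀ t₁ t₂ : K, γ (t₁ + t₂) = γ t₁ + (M t₁).mulVec (γ t₂) :=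
  explicit_cocycle_identity_general K p M hM γ hγ
end

section
/- Let X act on a group Q by automorphisms and let R be an X-stable central subgroup of Q. Two cohomology classes in H¹(X, Q) have the same image in H¹(X, Q/R) under the map induced by the quotient Q → Q/R if and only if they lie in the same orbit under the action of H¹(X, R) on H¹(X, Q). -/
/-- A 1-cocycle for the action of `X` on `Q` by automorphisms. -/
def IsCocycle {X Q : Type*} [Group X] [Group Q] [MulDistribMulAction X Q]
    (f : X → Q) : Prop :=
  ∀ x y : X, f (x * y) = f x * x • f y

/-- Two 1-cocycles are cohomologous. -/
def Cohomologous {X Q : Type*} [Group X] [Group Q] [MulDistribMulAction X Q]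
    (f g : X → Q) : Prop :=
  ∃ q : Q, ∀ x : X, f x = q⁻¹ * g x * x • q

/-- Let `R` be an `X`-stable central subgroup of `Q`. Two classes of 1-cocycles
`f, g : X → Q` have the same image in `H¹(X, Q/R)` (i.e. they become cohomologous
modulo `R`) if and only if they lie in the same orbit of `H¹(X,R)`, i.e. `g` is
cohomologous to `c·f` for some 1-cocycle `c` with values in `R`. -/
theorem same_image_mod_R_iff_same_H1R_orbit (X Q : Type*) [Group X] [Group Q]
    [MulDistribMulAction X Q]
    (R : Subgroup Q) (hRcentral : R ≤ Subgroup.center Q)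
    (hRstable : ∀ (x : X) (r : Q), r ∈ R → x • r ∈ R)
    (f g : X → Q) (hf : IsCocycle f) (hg : IsCocycle g) :
    (∃ q : Q, ∀ x : X, (q⁻¹ * g x * x • q)⁻¹ * f x ∈ R) ↔
    (∃ c : X → Q, (∀ x, c x ∈ R) ∧ IsCocycle c ∧
      Cohomologous (fun x => c x * f x) g) := by
  constructor
  · rintro ⟨q, hq⟩
    set g' : X → Q := fun x => q⁻¹ * g x * x • q with hg'def
    have hg' : IsCocycle g' := by
      intro x y
      show q⁻¹ * g (x * y) * (x * y) • q
          = (q⁻¹ * g x * x • q) * x • (q⁻¹ * g y * y • q)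
      rw [hg x y, mul_smul, smul_mul', smul_mul', smul_inv']
      group
    have hceq : ∀ x, g' x * (f x)⁻¹ = ((g' x)⁻¹ * f x)⁻¹ := by
      intro x
      have hcen := Subgroup.mem_center_iff.mp (hRcentral (hq x))
      have h1 := hcen (g' x)
      have hcm : Commute (g' x) (f x) := by
        unfold Commute SemiconjBy
        calc g' x * f x = g' x * (g' x * ((g' x)⁻¹ * f x)) := by group
          _ = g' x * ((g' x)⁻¹ * f x * g' x) := by rw [h1]
          _ = f x * g' x := by group
      rw [mul_inv_rev, inv_inv]
      exact hcm.inv_right.eq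
    have hcR : ∀ x, g' x * (f x)⁻¹ ∈ R := by
      intro x
      rw [hceq x]
      exact R.inv_mem (hq x)
    refine ⟨fun x => g' x * (f x)⁻¹, hcR, ?_, q, fun x => ?_⟩
    · intro x y
      have h2 : ∀ w : Q, w * (x • g' y * (x • f y)⁻¹)
          = x • g' y * (x • f y)⁻¹ * w := by
        intro w
        rw [← smul_inv', ← smul_mul']
        exact Subgroup.mem_center_iff.mp
          (hRcentral (hRstable x _ (hcR y))) w
      have hs : x • (g' y * (f y)⁻¹) = x • g' y * (x • f y)⁻¹ := by
        rw [smul_mul', smul_inv']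
      show g' (x * y) * (f (x * y))⁻¹
          = g' x * (f x)⁻¹ * x • (g' y * (f y)⁻¹)
      rw [hg' x y, hf x y, hs]
      calc g' x * x • g' y * (f x * x • f y)⁻¹
          = g' x * (x • g' y * (x • f y)⁻¹) * (f x)⁻¹ := by group
        _ = x • g' y * (x • f y)⁻¹ * g' x * (f x)⁻¹ := by rw [h2 (g' x)]
        _ = g' x * (f x)⁻¹ * (x • g' y * (x • f y)⁻¹) := by
            rw [mul_assoc, ← h2 (g' x * (f x)⁻¹)]
    · show g' x * (f x)⁻¹ * f x = q⁻¹ * g x * x • q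
      rw [inv_mul_cancel_right]
  · rintro ⟨c, hcR, hc, p, hp⟩
    refine ⟨p, fun x => ?_⟩
    have h := hp x
    simp only at h
    rw [← h, mul_inv_rev]
    have hcen := Subgroup.mem_center_iff.mp (hRcentral (hcR x))
    have hcm : Commute (c x) (f x) := (hcen (f x)).symm
    rw [mul_assoc, hcm.inv_left.eq, inv_mul_cancel_left]
    exact R.inv_mem (hcR x)
end

section
/- Let X act on a group Q by automorphisms and suppose Q admits a finite X-stable filtration Q = Q(1) ⊵ Q(2) ⊵ … ⊵ Q(r+1) = 1 such that for each i, the quotient V_i = Q(i)/Q(i+1) is central in Q/Q(i+1). If for every i, every 1-cocycle X → V_i is a coboundary (i.e., of the form x ↦ −v + x·v for some v ∈ V_i, written additively), then every 1-cocycle X → Q is a coboundary, i.e., of the form x ↦ q⁻¹(x·q) for some q ∈ Q. -/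
/-!
Twisting a cocycle `f` by `q`, i.e. replacing it by the cohomologous cocycle
`x ↦ q * f x * (x • q)⁻¹`, does not change whether it is a coboundary. If the twist
takes values in `Q(i)`, it is a cocycle into `V_i`, hence a coboundary there by some
`v ∈ Q(i)`, and twisting once more by `v` pushes the values into `Q(i+1)`. After `r`
steps the twisted cocycle is trivial, which exhibits `f` as a coboundary.
-/

open scoped commutatorElement

section Twist

variable {X Q : Type*} [Group X] [Group Q] [MulDistribMulAction X Q]

def cocycleTwist (q : Q) (f : X → Q) (x : X) : Q :=
  q * f x * (x • q)⁻¹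

theorem cocycleTwist_mul (v q : Q) (f : X → Q) :
    cocycleTwist (v * q) f = cocycleTwist v (cocycleTwist q f) := by
  funext x
  simp only [cocycleTwist, smul_mul']
  group

theorem isCocycle_cocycleTwist {f : X → Q} (hf : IsCocycle f) (q : Q) :
    IsCocycle (cocycleTwist q f) := by
  intro x y
  simp only [cocycleTwist, smul_mul', smul_inv', mul_smul, hf x y]
  group

theorem cocycleTwist_mem_of_inv_mul_mem {N : Subgroup Q} [N.Normal] {f : X → Q} {v : Q}
    {x : X} (h : (f x)⁻¹ * (v⁻¹ * x • v) ∈ N) : cocycleTwist v f x ∈ N := by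
  have hconj : cocycleTwist v f x = (v * f x) * ((f x)⁻¹ * (v⁻¹ * x • v))⁻¹ * (v * f x)⁻¹ := by
    simp only [cocycleTwist]
    group
  rw [hconj]
  exact Subgroup.Normal.conj_mem ‹_› _ (N.inv_mem h) _

theorem eq_inv_mul_smul_of_cocycleTwist_eq_one {f : X → Q} {q : Q} {x : X}
    (h : cocycleTwist q f x = 1) : f x = q⁻¹ * x • q := by
  rw [cocycleTwist, mul_inv_eq_one] at h
  rw [← h]
  group

/-- `hlevel` encodes that every cocycle into `M / N` is a coboundary. -/
theorem IsCocycle.exists_cocycleTwist_mem_of_level {f : X → Q} (hf : IsCocycle f)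
    {M N : Subgroup Q} [N.Normal] {q : Q} (hq : ∀ x, cocycleTwist q f x ∈ M)
    (hlevel : ∀ g : X → Q, (∀ x, g x ∈ M) →
      (∀ x y : X, (g (x * y))⁻¹ * (g x * x • g y) ∈ N) →
      ∃ v ∈ M, ∀ x : X, (g x)⁻¹ * (v⁻¹ * x • v) ∈ N) :
    ∃ q' : Q, ∀ x, cocycleTwist q' f x ∈ N := by
  have hcocycle := isCocycle_cocycleTwist hf q
  obtain ⟨v, -, hv⟩ := hlevel _ hq fun x y => by
    rw [hcocycle x y, inv_mul_cancel]
    exact N.one_mem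
  exact ⟨v * q, fun x => cocycleTwist_mul v q f ▸ cocycleTwist_mem_of_inv_mul_mem (hv x)⟩

end Twist

theorem cocycle_coboundary_of_filtration_general (X Q : Type*) [Group X] [Group Q]
    [MulDistribMulAction X Q] (r : ℕ) (F : ℕ → Subgroup Q)
    (hnormal : ∀ i, (F i).Normal)
    (htop : F 1 = ⊤) (hbot : F (r + 1) = ⊥)
    (hlevels : ∀ i, 1 ≤ i → i ≤ r → ∀ f : X → Q, (∀ x, f x ∈ F i) →
      (∀ x y : X, (f (x * y))⁻¹ * (f x * x • f y) ∈ F (i + 1)) →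
      ∃ v ∈ F i, ∀ x : X, (f x)⁻¹ * (v⁻¹ * x • v) ∈ F (i + 1)) :
    ∀ f : X → Q, IsCocycle f → ∃ q : Q, ∀ x : X, f x = q⁻¹ * x • q := by
  intro f hf
  have descend : ∀ n ≤ r, ∃ q : Q, ∀ x, cocycleTwist q f x ∈ F (n + 1) := by
    intro n
    induction n with
    | zero => exact fun _ => ⟨1, fun x => htop ▸ Subgroup.mem_top _⟩
    | succ n ih =>
      intro hn
      obtain ⟨q, hq⟩ := ih (by omega)
      have := hnormal (n + 2)
      exact hf.exists_cocycleTwist_mem_of_level hq (hlevels (n + 1) (by omega) hn)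
  obtain ⟨q, hq⟩ := descend r le_rfl
  exact ⟨q, fun x => eq_inv_mul_smul_of_cocycleTwist_eq_one <| by simpa [hbot] using hq x⟩

/-- If `Q` has a finite `X`-stable filtration `Q = Q(1) ⊵ ⋯ ⊵ Q(r+1) = 1` with each
level `V_i = Q(i)/Q(i+1)` central in `Q/Q(i+1)`, and every 1-cocycle of `X` into each
level is a coboundary, then every 1-cocycle `X → Q` is a coboundary, i.e.
`H¹(X,Q)` is trivial. Cocycles into the level `V_i` are represented by maps
`X → Q(i)` satisfying the cocycle identity modulo `Q(i+1)`. -/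
theorem cocycle_coboundary_of_filtration (X Q : Type*) [Group X] [Group Q]
    [MulDistribMulAction X Q] (r : ℕ) (F : ℕ → Subgroup Q)
    (hnormal : ∀ i, (F i).Normal)
    (hstable : ∀ (i : ℕ) (x : X) (q : Q), q ∈ F i → x • q ∈ F i)
    (hdesc : ∀ i, F (i + 1) ≤ F i)
    (htop : F 1 = ⊤) (hbot : F (r + 1) = ⊥)
    (hcentral : ∀ i, 1 ≤ i → i ≤ r → ∀ q ∈ F i, ∀ g : Q, ⁅g, q⁆ ∈ F (i + 1))
    (hlevels : ∀ i, 1 ≤ i → i ≤ r → ∀ f : X → Q, (∀ x, f x ∈ F i) →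
      (∀ x y : X, (f (x * y))⁻¹ * (f x * x • f y) ∈ F (i + 1)) →
      ∃ v ∈ F i, ∀ x : X, (f x)⁻¹ * (v⁻¹ * x • v) ∈ F (i + 1)) :
    ∀ f : X → Q, IsCocycle f → ∃ q : Q, ∀ x : X, f x = q⁻¹ * x • q :=
  cocycle_coboundary_of_filtration_general X Q r F hnormal htop hbot hlevels
end

section
/- Let p be an odd prime and K a field of characteristic p. With M(t) the matrices of the earlier statements acting on V = K^{p−1}, and γ(t) = Σ_{r=1}^{p−1} C(p−1, r) t^r e_r the associated 1-cocycle, γ is not a coboundary: there is no v ∈ V with γ(t) = M(t)·v − v for all t ∈ K. Indeed, for every v ∈ V the coefficient of e_1 in M(t)·v − v is zero for all t ∈ K, whereas the coefficient of e_1 in γ(t) is (p−1)·t, which is nonzero for t ≠ 0 since p − 1 ≢ 0 mod p. -/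
/-- Over a field of odd prime characteristic `p`, the explicit cocycle
`γ(t) = Σ_{r=1}^{p−1} C(p−1, r) tʳ e_r` for the unipotent matrices `M(t)` is not a
coboundary: for every `v`, the `e₁`-coefficient of `M(t)v − v` vanishes, while the
`e₁`-coefficient of `γ(t)` is `(p−1)t`, nonzero for `t ≠ 0`; hence there is no `v`
with `γ(t) = M(t)v − v` for all `t`. -/
theorem explicit_cocycle_not_coboundary (K : Type*) [Field K] (p : ℕ) (hp : p.Prime)
    (hodd : Odd p) [CharP K p]
    (M : K → Matrix (Fin (p - 1)) (Fin (p - 1)) K)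
    (hM : ∀ (t : K) (m r : Fin (p - 1)),
      M t m r = if (r : ℕ) ≤ (m : ℕ) then
        ((p - 1 - ((r : ℕ) + 1)).choose ((m : ℕ) - (r : ℕ)) : K) * t ^ ((m : ℕ) - (r : ℕ))
      else 0)
    (γ : K → (Fin (p - 1) → K))
    (hγ : ∀ (t : K) (r : Fin (p - 1)),
      γ t r = ((p - 1).choose ((r : ℕ) + 1) : K) * t ^ ((r : ℕ) + 1)) :
    (∀ (v : Fin (p - 1) → K) (t : K),
        ((M t).mulVec v - v) (⟨0, by have := hp.two_le; omega⟩ : Fin (p - 1)) = 0) ∧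
    (∀ t : K, γ t (⟨0, by have := hp.two_le; omega⟩ : Fin (p - 1)) = ((p - 1 : ℕ) : K) * t) ∧
    (∀ t : K, t ≠ 0 → ((p - 1 : ℕ) : K) * t ≠ 0) ∧
    ¬ ∃ v : Fin (p - 1) → K, ∀ t : K, γ t = (M t).mulVec v - v := by
  have hp2 := hp.two_le
  set z : Fin (p - 1) := ⟨0, by omega⟩ with hz
  have h1 : ∀ (v : Fin (p - 1) → K) (t : K), ((M t).mulVec v - v) z = 0 := by
    intro v t
    have hsum : (M t).mulVec v z = v z := by
      unfold Matrix.mulVec dotProduct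
      rw [Finset.sum_eq_single z]
      · simp only [hM]; simp [hz]
      · intro b _ hb
        have hb' : (b : ℕ) ≠ 0 := fun h => hb (Fin.ext h)
        simp only [hM]; rw [if_neg (by simp [hz]; omega), zero_mul]
      · simp
    simp [hsum]
  have h2 : ∀ t : K, γ t z = ((p - 1 : ℕ) : K) * t := by
    intro t
    rw [hγ]
    simp [hz, Nat.choose_one_right]
  have hcast : ((p - 1 : ℕ) : K) ≠ 0 := by
    rw [Ne, CharP.cast_eq_zero_iff K p]
    intro hdvd
    have := Nat.le_of_dvd (by omega) hdvd
    omega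
  refine ⟨h1, h2, fun t ht => mul_ne_zero hcast ht, ?_⟩
  rintro ⟨v, hv⟩
  have := h1 v 1
  rw [← hv 1, h2 1, mul_one] at this
  exact hcast this
end
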